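/- arXiv:2602.15035 — 4 statements merged into one kernel-verified Lean document; each statement's English description precedes it below -/
import Mathlib

section
/- Let g be a finite-dimensional real Lie algebra and g̃ = g ⊕ g the tangent Lie algebra with bracket [(x₁,x₂),(y₁,y₂)] = ([x₁,y₁], [x₁,y₂] + [x₂,y₁]). Let ⟨·,·⟩ be an inner product on g and define the inner product on g̃ by ⟨(x₁,x₂),(y₁,y₂)⟩̃ = ⟨x₁,y₁⟩ + ⟨x₂,y₂⟩. Then ⟨·,·⟩̃ is ad-invariant on g̃ (i.e., ⟨[z,x],y⟩̃ + ⟨x,[z,y]⟩̃ = 0 for all x,y,z ∈ g̃) if and only if ⟨·,·⟩ is ad-invariant on g and g is abelian. -/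
/-- The bracket of the tangent Lie algebra `g̃ = g ⊕ g`:
`[(x₁,x₂),(y₁,y₂)] = ([x₁,y₁], [x₁,y₂] + [x₂,y₁])`. -/
def tangentBracket {g : Type*} [LieRing g] (p q : g × g) : g × g :=
  (⁅p.1, q.1⁆, ⁅p.1, q.2⁆ + ⁅p.2, q.1⁆)

/-- The lifted inner product on `g̃ = g ⊕ g`:
`⟨(x₁,x₂),(y₁,y₂)⟩̃ = ⟨x₁,y₁⟩ + ⟨x₂,y₂⟩`. -/
def liftedForm {g : Type*} [LieRing g] [LieAlgebra ℝ g]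
    (B : g →ₗ[ℝ] g →ₗ[ℝ] ℝ) (p q : g × g) : ℝ :=
  B p.1 q.1 + B p.2 q.2

/-- Remark 3.4: the lifted inner product on the tangent Lie algebra `g̃ = g ⊕ g`
is ad-invariant iff the inner product on `g` is ad-invariant and `g` is abelian. -/
theorem stmt_1 (g : Type*) [LieRing g] [LieAlgebra ℝ g] [FiniteDimensional ℝ g]
    (B : g →ₗ[ℝ] g →ₗ[ℝ] ℝ)
    (hsymm : ∀ x y : g, B x y = B y x)
    (hposdef : ∀ x : g, x ≠ 0 → 0 < B x x) :
    (∀ x y z : g × g,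
        liftedForm B (tangentBracket z x) y + liftedForm B x (tangentBracket z y) = 0)
      ↔ ((∀ x y z : g, B ⁅z, x⁆ y + B x ⁅z, y⁆ = 0) ∧ ∀ x y : g, ⁅x, y⁆ = 0) := by
  constructor
  · intro h
    constructor
    · intro x y z
      have := h (x, 0) (y, 0) (z, 0)
      simpa [tangentBracket, liftedForm] using this
    · intro x y
      by_contra hne
      have key : ∀ w : g, B ⁅x, y⁆ w = 0 := by
        intro w
        have := h (y, 0) (0, w) (0, x)
        simpa [tangentBracket, liftedForm] using this
      have := hposdef ⁅x, y⁆ hne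
      rw [key ⁅x, y⁆] at this
      exact lt_irrefl 0 this
  · rintro ⟨hinv, hab⟩ x y z
    simp [tangentBracket, liftedForm, hab]
end

section
/- Let V be a finite-dimensional real inner product space with orthogonal decomposition V = m₁ ⊕ m₂, and let φ : (0,1) → ℝ be smooth and positive. For y = y₁ + y₂ with y₁ ∈ m₁, y₂ ∈ m₂, y ≠ 0, y₂ ≠ 0, set b = |y₂|/|y| and define g_y(u,v) = (1/2) ∂²/∂s∂t [F²(y+su+tv)]|_{s=t=0} where F(y) = |y|·φ(|y₂|/|y|). Then for u,v ∈ V with components u᙮, v᙮ in m᙮: g_y(u,v) = ⟨u,v⟩φ(b)² + φ(b)φ'(b)·(⟨y,v⟩⟨y₂,u₂⟩/(|y||y₂|) + ⟨y₂,v₂⟩⟨y,u⟩/(|y||y₂|) − ⟨y,u⟩⟨y,v⟩|y₂|/|y|³ + ⟨u₂,v₂⟩|y|/|y₂| − ⟨u,v⟩|y₂|/|y| − ⟨u₂,y₂⟩⟨v₂,y₂⟩|y|/|y₂|³) + (φ'(b)² + φ(b)φ''(b))·(⟨u₂,y₂⟩/(|y||y₂|) − ⟨u,y⟩|y₂|/|y|³)·(⟨v₂,y₂⟩|y|/|y₂|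 − ⟨v,y⟩|y₂|/|y|). -/
open scoped RealInnerProductSpace
open scoped RealInnerProductSpace

section auxTX
variable {V : Type*} [NormedAddCommGroup V] [InnerProductSpace ℝ V]

lemma tx_quad_hasDerivAt (c0 c1 c2 : ℝ) :
    HasDerivAt (fun t : ℝ => c0 + 2 * t * c1 + t ^ 2 * c2) (2 * c1) 0 := by
  have h1 : HasDerivAt (fun t : ℝ => 2 * t * c1) (2 * c1) 0 := by
    simpa using ((hasDerivAt_id (0:ℝ)).const_mul 2).mul_const c1
  have h2 : HasDerivAt (fun t : ℝ => t ^ 2 * c2) 0 0 := by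
    simpa using (hasDerivAt_pow 2 (0:ℝ)).mul_const c2
  have h := (h1.const_add c0).add h2
  rw [add_zero] at h
  exact h

lemma tx_norm_add_smul_sq (w z : V) (t : ℝ) :
    ‖w + t • z‖ ^ 2 = ‖w‖ ^ 2 + 2 * t * ⟪w, z⟫ + t ^ 2 * ‖z‖ ^ 2 := by
  rw [norm_add_sq_real, real_inner_smul_right, norm_smul, mul_pow]
  simp [Real.norm_eq_abs, sq_abs]
  ring

lemma tx_psi_hasDerivAt (φ : ℝ → ℝ) (hφ : ContDiff ℝ (⊤ : ℕ∞) φ)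
    {a b : ℝ → ℝ} {a' b' : ℝ} (ha : HasDerivAt a a' 0) (hb : HasDerivAt b b' 0)
    (ha0 : 0 < a 0) (hb0 : 0 < b 0) :
    HasDerivAt (fun t => a t * φ (Real.sqrt (b t) / Real.sqrt (a t)) ^ 2)
      (a' * φ (Real.sqrt (b 0) / Real.sqrt (a 0)) ^ 2
        + 2 * φ (Real.sqrt (b 0) / Real.sqrt (a 0))
            * deriv φ (Real.sqrt (b 0) / Real.sqrt (a 0))
            * (b' * Real.sqrt (a 0) / (2 * Real.sqrt (b 0))
               - a' * Real.sqrt (b 0) / (2 * Real.sqrt (a 0)))) 0 := by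
  have hsa := (Real.hasDerivAt_sqrt ha0.ne').comp 0 ha
  have hsb := (Real.hasDerivAt_sqrt hb0.ne').comp 0 hb
  have hsa0 : Real.sqrt (a 0) ≠ 0 := (Real.sqrt_pos.mpr ha0).ne'
  have hsb0 : Real.sqrt (b 0) ≠ 0 := (Real.sqrt_pos.mpr hb0).ne'
  have hφd : ∀ x : ℝ, HasDerivAt φ (deriv φ x) x :=
    fun x => ((hφ.differentiable (by simp)) x).hasDerivAt
  have hr := hsb.div hsa hsa0
  have hφr := (hφd _).comp 0 hr
  have hfull : HasDerivAt (fun t => a t * φ (Real.sqrt (b t) / Real.sqrt (a t)) ^ 2) _ 0 :=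
    ha.mul (hφr.pow 2)
  convert hfull using 1
  simp only [Function.comp_apply, Pi.div_apply]
  have hsq : Real.sqrt (a 0) ^ 2 = a 0 := Real.sq_sqrt ha0.le
  generalize Real.sqrt (a 0) = S at hsq hsa0 ⊢
  rw [← hsq]
  field_simp
  ring

end auxTX

/-- The Tan–Xu fundamental tensor of the `(α₁,α₂)`-norm `F(y) = ‖y‖·φ(‖y₂‖/‖y‖)`
on `V = m₂ᗮ ⊕ m₂`, where `y₂` denotes the orthogonal projection onto `m₂`. -/
noncomputable def tanXu {V : Type*} [NormedAddCommGroup V] [InnerProductSpace ℝ V]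
    [FiniteDimensional ℝ V] (m₂ : Submodule ℝ V) (φ : ℝ → ℝ) (y u v : V) : ℝ :=
  let y2 : V := (Submodule.orthogonalProjectionOnto m₂ y : V)
  let u2 : V := (Submodule.orthogonalProjectionOnto m₂ u : V)
  let v2 : V := (Submodule.orthogonalProjectionOnto m₂ v : V)
  let b : ℝ := ‖y2‖ / ‖y‖
  ⟪u, v⟫ * (φ b) ^ 2
    + φ b * deriv φ b *
      (⟪y, v⟫ * ⟪y2, u2⟫ / (‖y‖ * ‖y2‖)
        + ⟪y2, v2⟫ * ⟪y, u⟫ / (‖y‖ * ‖y2‖)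
        - ⟪y, u⟫ * ⟪y, v⟫ * ‖y2‖ / ‖y‖ ^ 3
        + ⟪u2, v2⟫ * ‖y‖ / ‖y2‖
        - ⟪u, v⟫ * ‖y2‖ / ‖y‖
        - ⟪u2, y2⟫ * ⟪v2, y2⟫ * ‖y‖ / ‖y2‖ ^ 3)
    + ((deriv φ b) ^ 2 + φ b * deriv (deriv φ) b) *
        (⟪u2, y2⟫ / (‖y‖ * ‖y2‖) - ⟪u, y⟫ * ‖y2‖ / ‖y‖ ^ 3) *
        (⟪v2, y2⟫ * ‖y‖ / ‖y2‖ - ⟪v, y⟫ * ‖y2‖ / ‖y‖)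

set_option maxHeartbeats 1000000

/-- Tan–Xu fundamental tensor formula: for the `(α₁,α₂)`-norm
`F(y) = ‖y‖·φ(‖y₂‖/‖y‖)`, the fundamental tensor
`g_y(u,v) = (1/2)·∂²/∂s∂t [F²(y+su+tv)]|_{s=t=0}` is given by the explicit
Tan–Xu expression `tanXu`. -/
theorem stmt_5 {V : Type*} [NormedAddCommGroup V] [InnerProductSpace ℝ V]
    [FiniteDimensional ℝ V] (m₂ : Submodule ℝ V) (φ : ℝ → ℝ) (hφ : ContDiff ℝ (⊤ : ℕ∞) φ)
    (hpos : ∀ s ∈ Set.Ioo (0 : ℝ) 1, 0 < φ s)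
    (y u v : V) (hy : y ≠ 0) (hy2 : (Submodule.orthogonalProjectionOnto m₂ y : V) ≠ 0) :
    deriv (fun s : ℝ => deriv (fun t : ℝ =>
        (‖y + s • u + t • v‖ *
          φ (‖(Submodule.orthogonalProjectionOnto m₂ (y + s • u + t • v) : V)‖
              / ‖y + s • u + t • v‖)) ^ 2) 0) 0 / 2
      = tanXu m₂ φ y u v := by
  set Y2 : V := (Submodule.orthogonalProjectionOnto m₂ y : V) with hY2
  set U2 : V := (Submodule.orthogonalProjectionOnto m₂ u : V) with hU2
  set V2 : V := (Submodule.orthogonalProjectionOnto m₂ v : V) with hV2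
  have hy' : (0:ℝ) < ‖y‖ := norm_pos_iff.mpr hy
  have hm' : (0:ℝ) < ‖Y2‖ := norm_pos_iff.mpr hy2
  have hφ' : Differentiable ℝ (deriv φ) :=
    (contDiff_infty_iff_deriv.mp (hφ.of_le (by simp))).2.differentiable (by simp)
  have hφd : ∀ x : ℝ, HasDerivAt φ (deriv φ x) x :=
    fun x => ((hφ.differentiable (by simp)) x).hasDerivAt
  have hdφd : ∀ x : ℝ, HasDerivAt (deriv φ) (deriv (deriv φ) x) x :=
    fun x => (hφ' x).hasDerivAt
  -- eventual nonvanishing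
  have hw1 : ∀ᶠ s : ℝ in nhds 0, y + s • u ≠ 0 := by
    have hc : ContinuousAt (fun s : ℝ => y + s • u) 0 := by fun_prop
    have := hc.eventually_ne (by simpa using hy)
    simpa using this
  have hw2 : ∀ᶠ s : ℝ in nhds 0, (Submodule.orthogonalProjectionOnto m₂ (y + s • u) : V) ≠ 0 := by
    have hc : ContinuousAt (fun s : ℝ => (Submodule.orthogonalProjectionOnto m₂ (y + s • u) : V)) 0 :=
      (continuous_subtype_val.comp ((Submodule.orthogonalProjectionOnto m₂).continuous.comp
        (by fun_prop))).continuousAt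
    have := hc.eventually_ne (by simpa [← hY2] using hy2)
    simpa using this
  -- Step 1: the inner derivative agrees with D near 0
  have hEq : (fun s : ℝ => deriv (fun t : ℝ =>
        (‖y + s • u + t • v‖ *
          φ (‖(Submodule.orthogonalProjectionOnto m₂ (y + s • u + t • v) : V)‖
              / ‖y + s • u + t • v‖)) ^ 2) 0)
      =ᶠ[nhds (0:ℝ)] (fun s : ℝ => 2 * (⟪y, v⟫ + s * ⟪u, v⟫) * φ (Real.sqrt (‖Y2‖ ^ 2 + 2 * s * ⟪Y2, U2⟫ + s ^ 2 * ‖U2‖ ^ 2) / Real.sqrt (‖y‖ ^ 2 + 2 * s * ⟪y, u⟫ + s ^ 2 * ‖u‖ ^ 2)) ^ 2 + 2 * φ (Real.sqrt (‖Y2‖ ^ 2 + 2 * s * ⟪Y2, U2⟫ + s ^ 2 * ‖U2‖ ^ 2) / Real.sqrt (‖y‖ ^ 2 + 2 * s * ⟪y, u⟫ + s ^ 2 * ‖u‖ ^ 2)) * deriv φ (Real.sqrt (‖Y2‖ ^ 2 + 2 * s * ⟪Y2, U2⟫ + s ^ 2 * ‖U2‖ ^ 2) / Real.sqrt (‖y‖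 ^ 2 + 2 * s * ⟪y, u⟫ + s ^ 2 * ‖u‖ ^ 2)) * (2 * (⟪Y2, V2⟫ + s * ⟪U2, V2⟫) * Real.sqrt (‖y‖ ^ 2 + 2 * s * ⟪y, u⟫ + s ^ 2 * ‖u‖ ^ 2) / (2 * Real.sqrt (‖Y2‖ ^ 2 + 2 * s * ⟪Y2, U2⟫ + s ^ 2 * ‖U2‖ ^ 2)) - 2 * (⟪y, v⟫ + s * ⟪u, v⟫) * Real.sqrt (‖Y2‖ ^ 2 + 2 * s * ⟪Y2, U2⟫ + s ^ 2 * ‖U2‖ ^ 2) / (2 * Real.sqrt (‖y‖ ^ 2 + 2 * s * ⟪y, u⟫ + s ^ 2 * ‖u‖ ^ 2)))) := by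
    filter_upwards [hw1, hw2] with s hs1 hs2
    have hproj : ∀ t : ℝ, (Submodule.orthogonalProjectionOnto m₂ (y + s • u + t • v) : V)
        = Y2 + s • U2 + t • V2 := by
      intro t
      rw [hY2, hU2, hV2]
      simp [map_add, map_smul]
    have e1 : ∀ t : ℝ, (‖y‖ ^ 2 + 2 * s * ⟪y, u⟫ + s ^ 2 * ‖u‖ ^ 2) + 2 * t * (⟪y, v⟫ + s * ⟪u, v⟫) + t ^ 2 * ‖v‖ ^ 2 = ‖y + s • u + t • v‖ ^ 2 := by
      intro t
      rw [tx_norm_add_smul_sq (y + s • u) v t, tx_norm_add_smul_sq y u s,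
        inner_add_left, real_inner_smul_left]
    have e2 : ∀ t : ℝ, (‖Y2‖ ^ 2 + 2 * s * ⟪Y2, U2⟫ + s ^ 2 * ‖U2‖ ^ 2) + 2 * t * (⟪Y2, V2⟫ + s * ⟪U2, V2⟫) + t ^ 2 * ‖V2‖ ^ 2
        = ‖(Submodule.orthogonalProjectionOnto m₂ (y + s • u + t • v) : V)‖ ^ 2 := by
      intro t
      rw [hproj t, tx_norm_add_smul_sq (Y2 + s • U2) V2 t, tx_norm_add_smul_sq Y2 U2 s,
        inner_add_left, real_inner_smul_left]
    have h0v : y + s • u + (0:ℝ) • v = y + s • u := by simp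
    have hA : HasDerivAt (fun t : ℝ => (‖y‖ ^ 2 + 2 * s * ⟪y, u⟫ + s ^ 2 * ‖u‖ ^ 2) + 2 * t * (⟪y, v⟫ + s * ⟪u, v⟫) + t ^ 2 * ‖v‖ ^ 2)
        (2 * (⟪y, v⟫ + s * ⟪u, v⟫)) 0 := tx_quad_hasDerivAt _ _ _
    have hB : HasDerivAt (fun t : ℝ => (‖Y2‖ ^ 2 + 2 * s * ⟪Y2, U2⟫ + s ^ 2 * ‖U2‖ ^ 2) + 2 * t * (⟪Y2, V2⟫ + s * ⟪U2, V2⟫) + t ^ 2 * ‖V2‖ ^ 2)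
        (2 * (⟪Y2, V2⟫ + s * ⟪U2, V2⟫)) 0 := tx_quad_hasDerivAt _ _ _
    have hA0 : (0:ℝ) < (‖y‖ ^ 2 + 2 * s * ⟪y, u⟫ + s ^ 2 * ‖u‖ ^ 2) + 2 * 0 * (⟪y, v⟫ + s * ⟪u, v⟫) + 0 ^ 2 * ‖v‖ ^ 2 := by
      rw [e1 0, h0v]
      exact pow_pos (norm_pos_iff.mpr hs1) 2
    have hB0 : (0:ℝ) < (‖Y2‖ ^ 2 + 2 * s * ⟪Y2, U2⟫ + s ^ 2 * ‖U2‖ ^ 2) + 2 * 0 * (⟪Y2, V2⟫ + s * ⟪U2, V2⟫) + 0 ^ 2 * ‖V2‖ ^ 2 := by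
      rw [e2 0, h0v]
      exact pow_pos (norm_pos_iff.mpr hs2) 2
    have hfun : (fun t : ℝ =>
        (‖y + s • u + t • v‖ *
          φ (‖(Submodule.orthogonalProjectionOnto m₂ (y + s • u + t • v) : V)‖
              / ‖y + s • u + t • v‖)) ^ 2)
        = (fun t : ℝ => ((‖y‖ ^ 2 + 2 * s * ⟪y, u⟫ + s ^ 2 * ‖u‖ ^ 2) + 2 * t * (⟪y, v⟫ + s * ⟪u, v⟫) + t ^ 2 * ‖v‖ ^ 2) *
            φ (Real.sqrt ((‖Y2‖ ^ 2 + 2 * s * ⟪Y2, U2⟫ + s ^ 2 * ‖U2‖ ^ 2) + 2 * t * (⟪Y2, V2⟫ + s * ⟪U2, V2⟫) + t ^ 2 * ‖V2‖ ^ 2)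
              / Real.sqrt ((‖y‖ ^ 2 + 2 * s * ⟪y, u⟫ + s ^ 2 * ‖u‖ ^ 2) + 2 * t * (⟪y, v⟫ + s * ⟪u, v⟫) + t ^ 2 * ‖v‖ ^ 2)) ^ 2) := by
      funext t
      rw [mul_pow, e1 t, e2 t, Real.sqrt_sq (norm_nonneg _), Real.sqrt_sq (norm_nonneg _)]
    show deriv (fun t : ℝ =>
        (‖y + s • u + t • v‖ *
          φ (‖(Submodule.orthogonalProjectionOnto m₂ (y + s • u + t • v) : V)‖
              / ‖y + s • u + t • v‖)) ^ 2) 0 = 2 * (⟪y, v⟫ + s * ⟪u, v⟫) * φ (Real.sqrt (‖Y2‖ ^ 2 + 2 * s * ⟪Y2, U2⟫ + s ^ 2 * ‖U2‖ ^ 2) / Real.sqrt (‖y‖ ^ 2 + 2 * s * ⟪y, u⟫ + s ^ 2 * ‖u‖ ^ 2)) ^ 2 + 2 * φ (Real.sqrt (‖Y2‖ ^ 2 + 2 * s * ⟪Y2, U2⟫ + s ^ 2 * ‖U2‖ ^ 2) / Real.sqrt (‖y‖ ^ 2 + 2 * s * ⟪y, u⟫ + s ^ 2 * ‖u‖ ^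 2)) * deriv φ (Real.sqrt (‖Y2‖ ^ 2 + 2 * s * ⟪Y2, U2⟫ + s ^ 2 * ‖U2‖ ^ 2) / Real.sqrt (‖y‖ ^ 2 + 2 * s * ⟪y, u⟫ + s ^ 2 * ‖u‖ ^ 2)) * (2 * (⟪Y2, V2⟫ + s * ⟪U2, V2⟫) * Real.sqrt (‖y‖ ^ 2 + 2 * s * ⟪y, u⟫ + s ^ 2 * ‖u‖ ^ 2) / (2 * Real.sqrt (‖Y2‖ ^ 2 + 2 * s * ⟪Y2, U2⟫ + s ^ 2 * ‖U2‖ ^ 2)) - 2 * (⟪y, v⟫ + s * ⟪u, v⟫) * Real.sqrt (‖Y2‖ ^ 2 + 2 * s * ⟪Y2, U2⟫ + s ^ 2 * ‖U2‖ ^ 2) / (2 * Real.sqrt (‖y‖ ^ 2 + 2 * s * ⟪y, u⟫ + s ^ 2 * ‖u‖ ^ 2)))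
    rw [hfun]
    exact (tx_psi_hasDerivAt φ hφ hA hB hA0 hB0).deriv.trans (by norm_num)
  rw [hEq.deriv_eq]
  -- Step 2: differentiate D at 0
  have hA0' : (0:ℝ) < ‖y‖ ^ 2 + 2 * 0 * ⟪y, u⟫ + 0 ^ 2 * ‖u‖ ^ 2 := by
    simpa using pow_pos hy' 2
  have hB0' : (0:ℝ) < ‖Y2‖ ^ 2 + 2 * 0 * ⟪Y2, U2⟫ + 0 ^ 2 * ‖U2‖ ^ 2 := by
    simpa using pow_pos hm' 2
  have hAd : HasDerivAt (fun s : ℝ => (‖y‖ ^ 2 + 2 * s * ⟪y, u⟫ + s ^ 2 * ‖u‖ ^ 2)) (2 * ⟪y, u⟫) 0 := tx_quad_hasDerivAt _ _ _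
  have hBd : HasDerivAt (fun s : ℝ => (‖Y2‖ ^ 2 + 2 * s * ⟪Y2, U2⟫ + s ^ 2 * ‖U2‖ ^ 2)) (2 * ⟪Y2, U2⟫) 0 := tx_quad_hasDerivAt _ _ _
  have hsa := (Real.hasDerivAt_sqrt hA0'.ne').comp 0 hAd
  have hsb := (Real.hasDerivAt_sqrt hB0'.ne').comp 0 hBd
  have hsane : Real.sqrt (‖y‖ ^ 2 + 2 * 0 * ⟪y, u⟫ + 0 ^ 2 * ‖u‖ ^ 2) ≠ 0 :=
    (Real.sqrt_pos.mpr hA0').ne'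
  have hsbne : Real.sqrt (‖Y2‖ ^ 2 + 2 * 0 * ⟪Y2, U2⟫ + 0 ^ 2 * ‖U2‖ ^ 2) ≠ 0 :=
    (Real.sqrt_pos.mpr hB0').ne'
  have hr := hsb.div hsa hsane
  have hφr := (hφd _).comp 0 hr
  have hdφr := (hdφd _).comp 0 hr
  have hlin1 : HasDerivAt (fun s : ℝ => (⟪y, v⟫ + s * ⟪u, v⟫)) ⟪u, v⟫ 0 := by
    simpa using ((hasDerivAt_id (0:ℝ)).mul_const ⟪u, v⟫).const_add ⟪y, v⟫
  have hlin2 : HasDerivAt (fun s : ℝ => (⟪Y2, V2⟫ + s * ⟪U2, V2⟫)) ⟪U2, V2⟫ 0 := by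
    simpa using ((hasDerivAt_id (0:ℝ)).mul_const ⟪U2, V2⟫).const_add ⟪Y2, V2⟫
  have hD : HasDerivAt (fun s : ℝ => 2 * (⟪y, v⟫ + s * ⟪u, v⟫) * φ (Real.sqrt (‖Y2‖ ^ 2 + 2 * s * ⟪Y2, U2⟫ + s ^ 2 * ‖U2‖ ^ 2) / Real.sqrt (‖y‖ ^ 2 + 2 * s * ⟪y, u⟫ + s ^ 2 * ‖u‖ ^ 2)) ^ 2 + 2 * φ (Real.sqrt (‖Y2‖ ^ 2 + 2 * s * ⟪Y2, U2⟫ + s ^ 2 * ‖U2‖ ^ 2) / Real.sqrt (‖y‖ ^ 2 + 2 * s * ⟪y, u⟫ + s ^ 2 * ‖u‖ ^ 2)) * deriv φ (Real.sqrt (‖Y2‖ ^ 2 + 2 * s * ⟪Y2, U2⟫ + s ^ 2 * ‖U2‖ ^ 2) / Real.sqrt (‖y‖ ^ 2 + 2 * s * ⟪y, u⟫ + s ^ 2 * ‖u‖ ^ 2)) * (2 * (⟪Y2, V2⟫ + s * ⟪U2, V2⟫) * Real.sqrt (‖y‖ ^ 2 + 2 * s * ⟪y, u⟫ + s ^ 2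 * ‖u‖ ^ 2) / (2 * Real.sqrt (‖Y2‖ ^ 2 + 2 * s * ⟪Y2, U2⟫ + s ^ 2 * ‖U2‖ ^ 2)) - 2 * (⟪y, v⟫ + s * ⟪u, v⟫) * Real.sqrt (‖Y2‖ ^ 2 + 2 * s * ⟪Y2, U2⟫ + s ^ 2 * ‖U2‖ ^ 2) / (2 * Real.sqrt (‖y‖ ^ 2 + 2 * s * ⟪y, u⟫ + s ^ 2 * ‖u‖ ^ 2)))) _ 0 :=
    ((hlin1.const_mul 2).mul (hφr.pow 2)).add
      (((hφr.const_mul 2).mul hdφr).mul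
        ((((hlin2.const_mul 2).mul hsa).div (hsb.const_mul 2)
            (mul_ne_zero two_ne_zero hsbne)).sub
          (((hlin1.const_mul 2).mul hsb).div (hsa.const_mul 2)
            (mul_ne_zero two_ne_zero hsane))))
  rw [hD.deriv]
  -- Step 3: algebra
  simp only [tanXu]
  rw [← hY2, ← hU2, ← hV2]
  rw [real_inner_comm u y, real_inner_comm v y, real_inner_comm U2 Y2,
    real_inner_comm V2 Y2]
  norm_num [Real.sqrt_sq hy'.le, Real.sqrt_sq hm'.le, Function.comp]
  field_simp
  ring
end

section
/- Let V be a finite-dimensional real inner product space with orthogonal decomposition V = m₁ ⊕ m₂ and F(y) = |y|·φ(|y₂|/|y|) with fundamental tensor g_y as in the Tan–Xu formula. Let X ∈ V with X ≠ 0, X₂ ≠ 0, b = |X₂|/|X|, and let W ∈ V satisfy ⟨X₂, W₂⟩ = 0. If g_X(X, W) = 0 and φ(b)² − φ(b)·φ'(b)·b ≠ 0, then ⟨X, W⟩ = 0. -/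
open scoped RealInnerProductSpace

/-- Converse direction of Proposition 3.3: if `⟨X₂,W₂⟩ = 0`, `g_X(X,W) = 0`, and the
nondegeneracy `φ(b)² − φ(b)·φ'(b)·b ≠ 0` holds at `b = ‖X₂‖/‖X‖`, then `⟨X,W⟩ = 0`. -/
theorem stmt_9 {V : Type*} [NormedAddCommGroup V] [InnerProductSpace ℝ V]
    [FiniteDimensional ℝ V] (m₂ : Submodule ℝ V) (φ : ℝ → ℝ) (hφ : ContDiff ℝ (⊤ : ℕ∞) φ)
    (X W : V) (hX : X ≠ 0) (hX2 : (Submodule.orthogonalProjectionOnto m₂ X : V) ≠ 0)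
    (hW2 : ⟪(Submodule.orthogonalProjectionOnto m₂ X : V), (Submodule.orthogonalProjectionOnto m₂ W : V)⟫ = 0)
    (hg : tanXu m₂ φ X X W = 0)
    (hnd : (φ (‖(Submodule.orthogonalProjectionOnto m₂ X : V)‖ / ‖X‖)) ^ 2
        - φ (‖(Submodule.orthogonalProjectionOnto m₂ X : V)‖ / ‖X‖)
          * deriv φ (‖(Submodule.orthogonalProjectionOnto m₂ X : V)‖ / ‖X‖)
          * (‖(Submodule.orthogonalProjectionOnto m₂ X : V)‖ / ‖X‖) ≠ 0) :
    ⟪X, W⟫ = 0 := by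
  set X2 : V := (Submodule.orthogonalProjectionOnto m₂ X : V) with hX2def
  set W2 : V := (Submodule.orthogonalProjectionOnto m₂ W : V) with hW2def
  have hnX : ‖X‖ ≠ 0 := norm_ne_zero_iff.mpr hX
  have hn2 : ‖X2‖ ≠ 0 := norm_ne_zero_iff.mpr hX2
  set b : ℝ := ‖X2‖ / ‖X‖ with hb
  have hW2X2 : ⟪W2, X2⟫ = 0 := by rw [real_inner_comm]; exact hW2
  have hXX : ⟪X, X⟫ = ‖X‖ ^ 2 := real_inner_self_eq_norm_sq X
  have hX2X2 : ⟪X2, X2⟫ = ‖X2‖ ^ 2 := real_inner_self_eq_norm_sq X2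
  have hWX : ⟪W, X⟫ = ⟪X, W⟫ := real_inner_comm X W
  simp only [tanXu] at hg
  rw [show (Submodule.orthogonalProjectionOnto m₂ X : V) = X2 from rfl,
    show (Submodule.orthogonalProjectionOnto m₂ W : V) = W2 from rfl] at hg
  rw [hW2, hW2X2, hXX, hX2X2, hWX] at hg
  have key : ⟪X, W⟫ * ((φ b) ^ 2 - φ b * deriv φ b * b) = 0 := by
    rw [← hg, hb]
    field_simp
    ring
  rcases mul_eq_zero.mp key with h | h
  · exact h
  · exact absurd h hnd
end

section
/- Let V be a finite-dimensional real inner product space with orthogonal decomposition V = m₁ ⊕ m₂ and F(y) = |y|·φ(|y₂|/|y|) with fundamental tensor g_y. For X ∈ V with X ≠ 0, X₂ ≠ 0, b = |X₂|/|X|, and for any W ∈ V with ⟨X₂,W₂⟩ = 0, the identity g_X(X,W) = ⟨X,W⟩·(φ(b)² − φ(b)·φ'(b)·b) holds. -/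
open scoped RealInnerProductSpace

/-- Core computation of Proposition 3.3: for `X ≠ 0`, `X₂ ≠ 0`, `b = ‖X₂‖/‖X‖`, and any
`W` with `⟨X₂,W₂⟩ = 0`, one has `g_X(X,W) = ⟨X,W⟩·(φ(b)² − φ(b)·φ'(b)·b)`. -/
theorem stmt_10 {V : Type*} [NormedAddCommGroup V] [InnerProductSpace ℝ V]
    [FiniteDimensional ℝ V] (m₂ : Submodule ℝ V) (φ : ℝ → ℝ) (hφ : ContDiff ℝ (⊤ : ℕ∞) φ)
    (X W : V) (hX : X ≠ 0) (hX2 : (Submodule.orthogonalProjectionOnto m₂ X : V) ≠ 0)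
    (hW2 : ⟪(Submodule.orthogonalProjectionOnto m₂ X : V), (Submodule.orthogonalProjectionOnto m₂ W : V)⟫ = 0) :
    tanXu m₂ φ X X W =
      ⟪X, W⟫ * ((φ (‖(Submodule.orthogonalProjectionOnto m₂ X : V)‖ / ‖X‖)) ^ 2
        - φ (‖(Submodule.orthogonalProjectionOnto m₂ X : V)‖ / ‖X‖)
          * deriv φ (‖(Submodule.orthogonalProjectionOnto m₂ X : V)‖ / ‖X‖)
          * (‖(Submodule.orthogonalProjectionOnto m₂ X : V)‖ / ‖X‖)) := by
  set X2 := (Submodule.orthogonalProjectionOnto m₂ X : V) with hX2def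
  set W2 := (Submodule.orthogonalProjectionOnto m₂ W : V) with hW2def
  have h1 : ⟪W2, X2⟫ = 0 := by rw [real_inner_comm]; exact hW2
  have h2 : ⟪X2, X2⟫ = ‖X2‖ ^ 2 := real_inner_self_eq_norm_sq X2
  have h3 : ⟪X, X⟫ = ‖X‖ ^ 2 := real_inner_self_eq_norm_sq X
  have hnX : ‖X‖ ≠ 0 := norm_ne_zero_iff.mpr hX
  have hnX2 : ‖X2‖ ≠ 0 := norm_ne_zero_iff.mpr hX2
  simp only [tanXu, ← hX2def, ← hW2def, hW2, h1, h2, h3]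
  field_simp
  ring
end
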